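/- arXiv:2402.04508 — 4 statements merged into one kernel-verified Lean document; each statement's English description precedes it below -/
import Mathlib

section
/- If p is a polynomial such that p(ρA) is entrywise nonnegative for every ρ > 0 and every n×n row-stochastic matrix A with strictly positive entries, then p ∈ 𝒫ₙ. Conversely, if p ∈ 𝒫ₙ then p(ρA) is entrywise nonnegative for all such ρ and A. -/
open Polynomial

def PolyPres (n : ℕ) : Set (Polynomial ℝ) :=
  {p | ∀ A : Matrix (Fin n) (Fin n) ℝ, (∀ i j, 0 ≤ A i j) →
    ∀ i j, 0 ≤ (aeval A p) i j}

/-! For a positive matrix `B`, maximizing `t` over the compact set of pairs `(t, x)` with `x` in the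
simplex and `t x ≤ B x` yields a Perron eigenvector `d > 0`, `B d = ρ d`. With `D = diagonal d`, the
matrix `ρ⁻¹ D⁻¹ B D` is positive and row-stochastic, and `p (D⁻¹ B D) = D⁻¹ p(B) D` has the entrywise
signs of `p(B)`. So `p(B) ≥ 0` for every positive `B`, and this passes to nonnegative matrices because
they are limits of positive ones and `M ↦ p(M)` is continuous. -/

theorem Polynomial.aeval_units_conj {R A : Type*} [CommSemiring R] [Semiring A] [Algebra R A]
    (u : Aˣ) (x : A) (p : R[X]) :
    aeval (↑u * x * ↑u⁻¹) p = ↑u * aeval x p * ↑u⁻¹ := by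
  simpa [ConjAct.units_smul_def] using
    aeval_algHom_apply (MulSemiringAction.toAlgHom R A (ConjAct.toConjAct u)) x p

open Finset Filter Topology

theorem exists_pos_forall_mul_le {ι : Type*} [Finite ι] {z w : ι → ℝ} (hw : ∀ i, 0 < w i) :
    ∃ ε > 0, ∀ i, ε * z i ≤ w i := by
  have hsmall : ∀ᶠ ε in 𝓝[>] (0 : ℝ), ∀ i, ε * z i ≤ w i := by
    refine eventually_all.2 fun i => ?_
    have : Tendsto (fun ε : ℝ => ε * z i) (𝓝[>] 0) (𝓝 0) := by
      simpa using ((continuous_mul_const (z i)).tendsto 0).mono_left nhdsWithin_le_nhds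
    exact this.eventually (eventually_le_nhds (hw i))
  exact (hsmall.and self_mem_nhdsWithin).exists.imp fun ε h => ⟨h.2, h.1⟩

theorem ne_zero_of_mem_stdSimplex {𝕜 ι : Type*} [Fintype ι] [Semiring 𝕜] [PartialOrder 𝕜]
    [Nontrivial 𝕜] {x : ι → 𝕜} (hx : x ∈ stdSimplex 𝕜 ι) : x ≠ 0 := by
  rintro rfl
  simpa using hx.2

namespace Matrix

variable {ι : Type*} [Fintype ι]

theorem aeval_diagonal_inv_mul_mul_diagonal_apply {K : Type*} [Field K] [DecidableEq ι]
    {d : ι → K} (hd : ∀ i, d i ≠ 0) (M : Matrix ι ι K) (p : K[X]) (i j : ι) :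
    aeval (diagonal d⁻¹ * M * diagonal d) p i j = (d i)⁻¹ * aeval M p i j * d j := by
  let u : (Matrix ι ι K)ˣ :=
    ⟨diagonal d⁻¹, diagonal d, by simp [inv_mul_cancel₀ (hd _)], by simp [mul_inv_cancel₀ (hd _)]⟩
  rw [show diagonal d⁻¹ * M * diagonal d = ↑u * M * ↑u⁻¹ from rfl, aeval_units_conj]
  simp [u]

theorem mulVec_apply_pos {m R : Type*} [Semiring R] [PartialOrder R] [IsStrictOrderedRing R]
    {B : Matrix m ι R} (hB : ∀ i j, 0 < B i j) {x : ι → R} (hx : 0 ≤ x) (hx0 : x ≠ 0) (i : m) :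
    0 < (B *ᵥ x) i := by
  obtain ⟨j, hj⟩ := Function.ne_iff.1 hx0
  exact sum_pos' (fun k _ => mul_nonneg (hB i k).le (hx k))
    ⟨j, mem_univ j, mul_pos (hB i j) ((hx j).lt_of_ne' hj)⟩

def collatzWielandtSet (B : Matrix ι ι ℝ) : Set (ℝ × (ι → ℝ)) :=
  (Set.Ici 0 ×ˢ stdSimplex ℝ ι) ∩ {q | q.1 • q.2 ≤ B *ᵥ q.2}

variable {B : Matrix ι ι ℝ}

theorem fst_le_of_mem_collatzWielandtSet (hB : ∀ i j, 0 ≤ B i j) {q : ℝ × (ι → ℝ)}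
    (hq : q ∈ collatzWielandtSet B) : q.1 ≤ ∑ i, ∑ j, B i j := by
  obtain ⟨⟨-, hx⟩, hle⟩ := hq
  calc q.1 = ∑ i, q.1 * q.2 i := by rw [← mul_sum, hx.2, mul_one]
    _ ≤ ∑ i, (B *ᵥ q.2) i := sum_le_sum fun i _ => hle i
    _ ≤ ∑ i, ∑ j, B i j := sum_le_sum fun i _ => sum_le_sum fun j _ =>
        mul_le_of_le_one_right (hB i j) (stdSimplex.le_one ⟨q.2, hx⟩ j)

theorem isCompact_collatzWielandtSet (hB : ∀ i j, 0 ≤ B i j) :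
    IsCompact (collatzWielandtSet B) := by
  have hclosed : IsClosed (collatzWielandtSet B) :=
    (isClosed_Ici.prod (isClosed_stdSimplex ℝ ι)).inter <|
      isClosed_le (continuous_fst.smul continuous_snd) (continuous_const.matrix_mulVec continuous_snd)
  refine ((isCompact_Icc (b := ∑ i, ∑ j, B i j)).prod (isCompact_stdSimplex ℝ ι)).of_isClosed_subset
    hclosed fun q hq => ⟨⟨hq.1.1, fst_le_of_mem_collatzWielandtSet hB hq⟩, hq.1.2⟩

theorem mk_inv_sum_smul_mem_collatzWielandtSet [Nonempty ι] {t : ℝ} (ht : 0 ≤ t) {z : ι → ℝ}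
    (hz : ∀ i, 0 < z i) (hle : t • z ≤ B *ᵥ z) :
    (t, (∑ i, z i)⁻¹ • z) ∈ collatzWielandtSet B := by
  have hs : 0 ≤ (∑ i, z i)⁻¹ := inv_nonneg.2 (sum_nonneg fun i _ => (hz i).le)
  refine ⟨⟨ht, fun i => mul_nonneg hs (hz i).le, ?_⟩, ?_⟩
  · simp only [Pi.smul_apply, smul_eq_mul, ← mul_sum]
    exact inv_mul_cancel₀ (sum_pos (fun i _ => hz i) univ_nonempty).ne'
  · show t • (∑ i, z i)⁻¹ • z ≤ B *ᵥ (∑ i, z i)⁻¹ • z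
    simpa only [mulVec_smul, smul_comm t] using smul_le_smul_of_nonneg_left hle hs

/-- If `y = B x - t x ≠ 0` then `B y > 0`, so `B (B x) = B y + t • B x ≥ (t + ε) • B x` for some
`ε > 0`. -/
theorem exists_lt_mem_collatzWielandtSet [Nonempty ι] (hB : ∀ i j, 0 < B i j) {t : ℝ} {x : ι → ℝ}
    (hq : (t, x) ∈ collatzWielandtSet B) (hne : B *ᵥ x ≠ t • x) :
    ∃ q ∈ collatzWielandtSet B, t < q.1 := by
  obtain ⟨⟨ht, hx⟩, hle⟩ := hq
  set y := B *ᵥ x - t • x with hy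
  have hz : ∀ i, 0 < (B *ᵥ x) i := mulVec_apply_pos hB hx.1 (ne_zero_of_mem_stdSimplex hx)
  have hBy : ∀ i, 0 < (B *ᵥ y) i := mulVec_apply_pos hB (sub_nonneg.2 hle) (sub_ne_zero.2 hne)
  obtain ⟨ε, hε, hεle⟩ := exists_pos_forall_mul_le (z := B *ᵥ x) hBy
  have hBz : B *ᵥ B *ᵥ x = B *ᵥ y + t • B *ᵥ x := by
    rw [hy, mulVec_sub, mulVec_smul, sub_add_cancel]
  refine ⟨_, mk_inv_sum_smul_mem_collatzWielandtSet (add_nonneg ht hε.le) hz ?_,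
    lt_add_of_pos_right t hε⟩
  intro i
  rw [hBz]
  simp only [Pi.smul_apply, Pi.add_apply, smul_eq_mul, add_mul]
  linarith [hεle i]

theorem exists_pos_eigenvector_of_pos (hB : ∀ i j, 0 < B i j) :
    ∃ ρ : ℝ, 0 < ρ ∧ ∃ d : ι → ℝ, (∀ i, 0 < d i) ∧ B *ᵥ d = ρ • d := by
  rcases isEmpty_or_nonempty ι with _ | _
  · exact ⟨1, one_pos, 0, isEmptyElim, Subsingleton.elim _ _⟩
  obtain ⟨ε, hε, hε1⟩ := exists_pos_forall_mul_le (z := 1)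
    (mulVec_apply_pos hB zero_le_one one_ne_zero)
  have h0 := mk_inv_sum_smul_mem_collatzWielandtSet (z := 1) hε.le (fun _ => one_pos)
    fun i => by simpa using hε1 i
  obtain ⟨⟨ρ, d⟩, hmem, hmax⟩ := (isCompact_collatzWielandtSet fun i j => (hB i j).le).exists_isMaxOn
    ⟨_, h0⟩ continuous_fst.continuousOn
  have hρ : 0 < ρ := hε.trans_le (hmax h0)
  have heig : B *ᵥ d = ρ • d := by
    by_contra hne
    obtain ⟨q, hq, hlt⟩ := exists_lt_mem_collatzWielandtSet hB hmem hne
    exact (hmax hq).not_gt hlt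
  refine ⟨ρ, hρ, d, fun i => pos_of_mul_pos_right ?_ hρ.le, heig⟩
  simpa [heig] using mulVec_apply_pos hB hmem.1.2.1 (ne_zero_of_mem_stdSimplex hmem.1.2) i

variable [DecidableEq ι]

theorem exists_diagonal_conj_eq_smul_stochastic (hB : ∀ i j, 0 < B i j) :
    ∃ ρ : ℝ, 0 < ρ ∧ ∃ d : ι → ℝ, (∀ i, 0 < d i) ∧ ∃ A : Matrix ι ι ℝ, (∀ i j, 0 < A i j) ∧
      (∀ i, ∑ j, A i j = 1) ∧ diagonal d⁻¹ * B * diagonal d = ρ • A := by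
  obtain ⟨ρ, hρ, d, hd, heig⟩ := exists_pos_eigenvector_of_pos hB
  have hA : ∀ i j, (ρ⁻¹ • (diagonal d⁻¹ * B * diagonal d)) i j = ρ⁻¹ * ((d i)⁻¹ * B i j * d j) := by
    simp [diagonal_mul, mul_diagonal]
  refine ⟨ρ, hρ, d, hd, ρ⁻¹ • (diagonal d⁻¹ * B * diagonal d), fun i j => ?_, fun i => ?_,
    by rw [smul_smul, mul_inv_cancel₀ hρ.ne', one_smul]⟩
  · rw [hA]
    have := hd i; have := hd j; have := hB i j
    positivity
  · have hrow : ∑ j, B i j * d j = ρ * d i := congrFun heig i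
    calc ∑ j, (ρ⁻¹ • (diagonal d⁻¹ * B * diagonal d)) i j
        = ρ⁻¹ * (d i)⁻¹ * ∑ j, B i j * d j := by
          rw [mul_sum]; exact sum_congr rfl fun j _ => by rw [hA]; ring
      _ = 1 := by rw [hrow]; field_simp [(hd i).ne']

theorem aeval_apply_nonneg_of_pos {p : ℝ[X]}
    (h : ∀ ρ : ℝ, 0 < ρ → ∀ A : Matrix ι ι ℝ, (∀ i j, 0 < A i j) → (∀ i, ∑ j, A i j = 1) →
      ∀ i j, 0 ≤ aeval (ρ • A) p i j)
    (hB : ∀ i j, 0 < B i j) (i j : ι) : 0 ≤ aeval B p i j := by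
  obtain ⟨ρ, hρ, d, hd, A, hApos, hAsum, hconj⟩ := exists_diagonal_conj_eq_smul_stochastic hB
  have key := h ρ hρ A hApos hAsum i j
  rw [← hconj, aeval_diagonal_inv_mul_mul_diagonal_apply (fun k => (hd k).ne')] at key
  exact (mul_nonneg_iff_of_pos_left (inv_pos.2 (hd i))).1 ((mul_nonneg_iff_of_pos_right (hd j)).1 key)

theorem isClosed_setOf_aeval_apply_nonneg (p : ℝ[X]) :
    IsClosed {M : Matrix ι ι ℝ | ∀ i j, 0 ≤ aeval M p i j} := by
  simp only [Set.ofPred_forall]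
  exact isClosed_iInter fun i => isClosed_iInter fun j =>
    isClosed_le continuous_const ((Polynomial.continuous_aeval p).matrix_elem i j)

theorem mem_closure_setOf_pos {m n : Type*} {A : Matrix m n ℝ} (hA : ∀ i j, 0 ≤ A i j) :
    A ∈ closure {B : Matrix m n ℝ | ∀ i j, 0 < B i j} := by
  have hlim : Tendsto (fun ε : ℝ => A + ε • of fun _ _ => (1 : ℝ)) (𝓝[>] 0) (𝓝 A) := by
    have hcont : Continuous fun ε : ℝ => A + ε • of fun _ _ => (1 : ℝ) := by fun_prop
    simpa using (hcont.tendsto 0).mono_left nhdsWithin_le_nhds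
  refine mem_closure_of_tendsto hlim (eventually_mem_nhdsWithin.mono fun ε hε i j => ?_)
  simpa using add_pos_of_nonneg_of_pos (hA i j) hε

end Matrix

theorem polyPres_iff_positive_stochastic_general (n : ℕ) (p : Polynomial ℝ) :
    p ∈ PolyPres n ↔
      ∀ ρ : ℝ, 0 < ρ → ∀ A : Matrix (Fin n) (Fin n) ℝ,
        (∀ i j, 0 < A i j) → (∀ i, ∑ j, A i j = 1) →
        ∀ i j, 0 ≤ (aeval (ρ • A) p) i j := by
  refine ⟨fun hp ρ hρ A hA _ => hp _ fun i j => ?_, fun h A hA => ?_⟩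
  · simpa using mul_nonneg hρ.le (hA i j).le
  · exact closure_minimal (fun B hB => Matrix.aeval_apply_nonneg_of_pos h hB)
      (Matrix.isClosed_setOf_aeval_apply_nonneg p) (Matrix.mem_closure_setOf_pos hA)

theorem polyPres_iff_positive_stochastic (n : ℕ) (hn : 0 < n) (p : Polynomial ℝ) :
    p ∈ PolyPres n ↔
      ∀ ρ : ℝ, 0 < ρ → ∀ A : Matrix (Fin n) (Fin n) ℝ,
        (∀ i j, 0 < A i j) → (∀ i, ∑ j, A i j = 1) →
        ∀ i j, 0 ≤ (aeval (ρ • A) p) i j :=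
  polyPres_iff_positive_stochastic_general n p
end

section
/- A polynomial p ∈ ℝ[x] satisfies p(x) ≥ 0 for all x ≥ 0 if and only if there exist polynomials f₁, f₂, g₁, g₂ ∈ ℝ[x] with p(x) = f₁(x)² + f₂(x)² + x·(g₁(x)² + g₂(x)²). (Pólya–Szegő characterization of 𝒫₁.) -/
/-!
The polynomials `f₁² + f₂² + X (g₁² + g₂²)` form a multiplicative monoid: they are the
reduced norms `a² + b² + X c² + X d²` of the quaternion algebra `(-1, -X)` over `ℝ[X]`. A polynomial that is
nonnegative on `[0, ∞)` and not constant has a factor of one of three shapes, all in the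
monoid: `(X - a)² + b²` from a non-real root, `X - r` from a root `r ≤ 0`, or `(X - r)²` from a
root `r > 0`, which is a local minimum and hence a double root. The cofactor is again
nonnegative on `[0, ∞)`, by continuity, so induction on the degree concludes.
-/

open Polynomial

namespace Polynomial

def sumSqAddXSumSq : Submonoid ℝ[X] where
  carrier := {p | ∃ f₁ f₂ g₁ g₂ : ℝ[X], p = f₁ ^ 2 + f₂ ^ 2 + X * (g₁ ^ 2 + g₂ ^ 2)}
  one_mem' := ⟨1, 0, 0, 0, by ring⟩
  mul_mem' := by
    rintro _ _ ⟨a, b, c, d, rfl⟩ ⟨e, f, g, h, rfl⟩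
    exact ⟨a * e - b * f - X * (c * g + d * h), a * f + b * e - X * (d * g - c * h),
      a * g - b * h + c * e + d * f, a * h + b * g + d * e - c * f, by ring⟩

namespace sumSqAddXSumSq

lemma sq_add_sq_mem (f g : ℝ[X]) : f ^ 2 + g ^ 2 ∈ sumSqAddXSumSq :=
  ⟨f, g, 0, 0, by ring⟩

lemma C_mem {c : ℝ} (hc : 0 ≤ c) : C c ∈ sumSqAddXSumSq := by
  simpa [← C_pow, Real.sq_sqrt hc] using sq_add_sq_mem (C √c) 0

lemma X_sub_C_mem {r : ℝ} (hr : r ≤ 0) : X - C r ∈ sumSqAddXSumSq := by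
  refine ⟨C √(-r), 0, 1, 0, ?_⟩
  rw [← C_pow, Real.sq_sqrt (neg_nonneg.mpr hr), C_neg]
  ring

lemma eval_nonneg {p : ℝ[X]} (hp : p ∈ sumSqAddXSumSq) {x : ℝ} (hx : 0 ≤ x) :
    0 ≤ p.eval x := by
  obtain ⟨f₁, f₂, g₁, g₂, rfl⟩ := hp
  simp only [eval_add, eval_mul, eval_pow, eval_X]
  positivity

end sumSqAddXSumSq

open sumSqAddXSumSq

lemma eval_nonneg_of_mul {q h : ℝ[X]} (hq : q ≠ 0) (hq_nonneg : ∀ x, 0 ≤ x → 0 ≤ q.eval x)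
    (hqh : ∀ x, 0 ≤ x → 0 ≤ (q * h).eval x) : ∀ x, 0 ≤ x → 0 ≤ h.eval x := by
  intro x hx
  have h_lim : Filter.Tendsto h.eval (nhdsWithin x (Set.Ioi x)) (nhds (h.eval x)) :=
    h.continuous.continuousWithinAt
  -- Approach `x` from the right, avoiding the finitely many roots of `q`, where `q > 0`.
  have h_ne_root : ∀ᶠ y in nhdsWithin x (Set.Ioi x), ¬ q.IsRoot y :=
    nhdsWithin_mono x (fun y hy => ne_of_gt hy) <|
      nhdsNE_le_cofinite x (finite_setOfPred_isRoot hq).eventually_cofinite_notMem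
  refine ge_of_tendsto h_lim ?_
  filter_upwards [h_ne_root, self_mem_nhdsWithin] with y hy hxy
  have hy0 : 0 ≤ y := hx.trans (le_of_lt hxy)
  have hqy : 0 < q.eval y := (hq_nonneg y hy0).lt_of_ne' hy
  exact nonneg_of_mul_nonneg_right (by simpa using hqh y hy0) hqy

lemma sq_X_sub_C_dvd_of_isLocalMin {p : ℝ[X]} (hp : p ≠ 0) {r : ℝ} (hr : p.IsRoot r)
    (hmin : IsLocalMin p.eval r) : (X - C r) ^ 2 ∣ p := by
  have hderiv : p.derivative.IsRoot r := by
    simpa [Polynomial.deriv] using hmin.deriv_eq_zero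
  exact (le_rootMultiplicity_iff hp).mp ((one_lt_rootMultiplicity_iff_isRoot hp).mpr ⟨hr, hderiv⟩)

lemma exists_sumSqAddXSumSq_dvd_of_isRoot {p : ℝ[X]} (hp : p ≠ 0)
    (hp_nonneg : ∀ x, 0 ≤ x → 0 ≤ p.eval x) {r : ℝ} (hr : p.IsRoot r) :
    ∃ q ∈ sumSqAddXSumSq, 0 < q.natDegree ∧ q ∣ p := by
  rcases le_or_gt r 0 with hr0 | hr0
  · exact ⟨X - C r, X_sub_C_mem hr0, by simp, dvd_iff_isRoot.mpr hr⟩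
  · refine ⟨(X - C r) ^ 2, by simpa using sq_add_sq_mem (X - C r) 0, by simp,
      sq_X_sub_C_dvd_of_isLocalMin hp hr ?_⟩
    filter_upwards [eventually_gt_nhds hr0] with y hy
    rw [hr.eq_zero]
    exact hp_nonneg y hy.le

lemma exists_sumSqAddXSumSq_dvd {p : ℝ[X]} (hp_nonneg : ∀ x, 0 ≤ x → 0 ≤ p.eval x)
    (hdeg : 0 < p.natDegree) : ∃ q ∈ sumSqAddXSumSq, 0 < q.natDegree ∧ q ∣ p := by
  have hp : p ≠ 0 := ne_zero_of_natDegree_gt hdeg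
  obtain ⟨z, hz⟩ := IsAlgClosed.exists_aeval_eq_zero ℂ p (natDegree_pos_iff_degree_pos.mp hdeg).ne'
  by_cases him : z.im = 0
  · have hz_re : z = (z.re : ℂ) := Complex.ext rfl (by simp [him])
    refine exists_sumSqAddXSumSq_dvd_of_isRoot hp hp_nonneg (r := z.re) ?_
    rw [hz_re, ← Complex.coe_algebraMap, aeval_algebraMap_apply_eq_algebraMap_eval] at hz
    exact (map_eq_zero_iff _ (algebraMap ℝ ℂ).injective).mp hz
  · have hquad : X ^ 2 - C (2 * z.re) * X + C (‖z‖ ^ 2) = (X - C z.re) ^ 2 + C z.im ^ 2 := by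
      rw [Complex.sq_norm, Complex.normSq_apply, C_mul, C_add, C_mul, C_mul, C_ofNat]
      ring
    refine ⟨_, hquad ▸ sq_add_sq_mem _ _, ?_, p.quadratic_dvd_of_aeval_eq_zero_im_ne_zero hz him⟩
    rw [hquad, ← C_pow, natDegree_add_C]
    simp

lemma mem_sumSqAddXSumSq_of_nonneg {p : ℝ[X]} (hp : ∀ x, 0 ≤ x → 0 ≤ p.eval x) :
    p ∈ sumSqAddXSumSq := by
  induction hn : p.natDegree using Nat.strong_induction_on generalizing p with
  | _ n ih =>
    rcases Nat.eq_zero_or_pos n with hn0 | hn0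
    · rw [eq_C_of_natDegree_eq_zero (hn.trans hn0)]
      exact C_mem (by simpa [coeff_zero_eq_eval_zero] using hp 0 le_rfl)
    · obtain ⟨q, hq, hq_deg, h, rfl⟩ := exists_sumSqAddXSumSq_dvd hp (hn ▸ hn0)
      have hq0 : q ≠ 0 := ne_zero_of_natDegree_gt hq_deg
      have hh0 : h ≠ 0 := by
        rintro rfl
        simp only [mul_zero, natDegree_zero] at hn
        omega
      have hh : ∀ x, 0 ≤ x → 0 ≤ h.eval x :=
        eval_nonneg_of_mul hq0 (fun x hx => eval_nonneg hq hx) hp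
      refine mul_mem hq (ih h.natDegree ?_ hh rfl)
      rw [← hn, natDegree_mul hq0 hh0]
      omega

end Polynomial

theorem polya_szego (p : Polynomial ℝ) :
    (∀ x : ℝ, 0 ≤ x → 0 ≤ p.eval x) ↔
      ∃ f₁ f₂ g₁ g₂ : Polynomial ℝ,
        p = f₁ ^ 2 + f₂ ^ 2 + X * (g₁ ^ 2 + g₂ ^ 2) :=
  ⟨mem_sumSqAddXSumSq_of_nonneg, fun hp _ hx => sumSqAddXSumSq.eval_nonneg hp hx⟩
end

section
/- Fix n ≥ 1 and m ≥ 2n, and fix i with 0 ≤ i ≤ n−1 or m−n+1 ≤ i ≤ m. If p ∈ 𝒫ₙ has degree at most m, then the coefficient of x^i in p is nonnegative. (The first n and last n coefficients of a polynomial in 𝒫ₙ,ₘ are nonnegative.) -/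
open Polynomial

/-!
Let `C` be the cyclic permutation matrix of size `n` and `t > 0`. Since `(t C)^k` has its
`(0, i mod n)` entry equal to `t^k` when `k ≡ i [MOD n]` and `0` otherwise, the `(0, i mod n)`
entry of `p(t C)` is `q(t)`, where `q` keeps exactly the monomials of `p` whose exponent is
congruent to `i` modulo `n`. So `q ≥ 0` on `(0, ∞)`, and hence both its lowest and its highest
coefficient are nonnegative (let `t → ∞` in `q` and in its reverse). If `i < n`, then `p_i` is
the lowest coefficient of `q`; if `i > m - n` and `deg p ≤ m`, it is the highest one.
-/

namespace Polynomial

theorem leadingCoeff_nonneg_of_nonneg_on_Ioi {p : ℝ[X]}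
    (hp : ∀ t ∈ Set.Ioi (0 : ℝ), 0 ≤ p.eval t) : 0 ≤ p.leadingCoeff := by
  by_contra! hneg
  rcases le_or_gt p.degree 0 with hdeg | hdeg
  · have h1 := hp 1 (Set.mem_Ioi.mpr one_pos)
    rw [eq_C_of_degree_le_zero hdeg, eval_C] at h1
    rw [eq_C_of_degree_le_zero hdeg, leadingCoeff_C] at hneg
    exact hneg.not_ge h1
  · obtain ⟨t, ht_neg, ht_pos⟩ := ((tendsto_atBot_of_leadingCoeff_nonpos p hdeg hneg.le).eventually
      (Filter.eventually_lt_atBot 0) |>.and (Filter.eventually_gt_atTop 0)).exists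
    exact (hp t ht_pos).not_gt ht_neg

theorem trailingCoeff_nonneg_of_nonneg_on_Ioi {p : ℝ[X]}
    (hp : ∀ t ∈ Set.Ioi (0 : ℝ), 0 ≤ p.eval t) : 0 ≤ p.trailingCoeff := by
  rw [← reverse_leadingCoeff]
  refine leadingCoeff_nonneg_of_nonneg_on_Ioi fun t ht => ?_
  have ht_inv : (0 : ℝ) < t⁻¹ := inv_pos.mpr ht
  have := invertibleOfNonzero ht_inv.ne'
  have h := eval₂_reverse_mul_pow (RingHom.id ℝ) t⁻¹ p
  rw [invOf_eq_inv, inv_inv] at h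
  have h_eval := hp _ ht_inv
  rw [eval, ← h] at h_eval
  exact nonneg_of_mul_nonneg_left h_eval (pow_pos ht_inv _)

theorem coeff_nonneg_of_nonneg_on_Ioi_of_natDegree_le {p : ℝ[X]} {i : ℕ}
    (hp : ∀ t ∈ Set.Ioi (0 : ℝ), 0 ≤ p.eval t) (hi : p.natDegree ≤ i) : 0 ≤ p.coeff i := by
  rcases hi.eq_or_lt with rfl | hlt
  · exact leadingCoeff_nonneg_of_nonneg_on_Ioi hp
  · rw [coeff_eq_zero_of_natDegree_lt hlt]

theorem coeff_nonneg_of_nonneg_on_Ioi_of_coeff_lt_eq_zero {p : ℝ[X]} {i : ℕ}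
    (hp : ∀ t ∈ Set.Ioi (0 : ℝ), 0 ≤ p.eval t) (hi : ∀ j < i, p.coeff j = 0) :
    0 ≤ p.coeff i := by
  rcases eq_or_ne p 0 with rfl | hp0
  · rw [coeff_zero]
  rcases (le_natTrailingDegree hp0 hi).eq_or_lt with rfl | hlt
  · exact trailingCoeff_nonneg_of_nonneg_on_Ioi hp
  · rw [coeff_eq_zero_of_lt_natTrailingDegree hlt]

section ResidueClassPart

variable {R : Type*} [CommSemiring R]

noncomputable def residueClassPart (p : R[X]) (n i : ℕ) : R[X] :=
  ∑ k ∈ p.support with k ≡ i [MOD n], monomial k (p.coeff k)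

theorem coeff_residueClassPart (p : R[X]) (n i j : ℕ) :
    (p.residueClassPart n i).coeff j = if j ≡ i [MOD n] then p.coeff j else 0 := by
  by_cases hj : j ≡ i [MOD n] <;> by_cases hpj : p.coeff j = 0 <;>
    simp [residueClassPart, finsetSum_coeff, coeff_monomial, hj, hpj]

theorem coeff_residueClassPart_self (p : R[X]) (n i : ℕ) :
    (p.residueClassPart n i).coeff i = p.coeff i := by
  rw [coeff_residueClassPart, if_pos (Nat.ModEq.refl i)]

theorem eval_residueClassPart (p : R[X]) (n i : ℕ) (t : R) :
    (p.residueClassPart n i).eval t = ∑ k ∈ p.support with k ≡ i [MOD n], p.coeff k * t ^ k := by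
  simp [residueClassPart, eval_finsetSum]

theorem coeff_residueClassPart_of_lt {p : R[X]} {n i j : ℕ} (hi : i < n) (hj : j < i) :
    (p.residueClassPart n i).coeff j = 0 := by
  rw [coeff_residueClassPart, if_neg]
  exact fun hji => hj.ne (hji.eq_of_lt_of_lt (hj.trans hi) hi)

theorem natDegree_residueClassPart_le {p : R[X]} {n i : ℕ} (hdeg : p.natDegree < i + n) :
    (p.residueClassPart n i).natDegree ≤ i := by
  refine natDegree_le_iff_coeff_eq_zero.mpr fun j hj => ?_
  rw [coeff_residueClassPart]
  split_ifs with hji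
  · refine coeff_eq_zero_of_natDegree_lt ?_
    by_contra! hjdeg
    refine hj.ne' (hji.eq_of_abs_lt ?_)
    rw [abs_lt]
    constructor <;> omega
  · rfl

end ResidueClassPart

end Polynomial

namespace Equiv.Perm

variable {ι R : Type*} [Fintype ι] [DecidableEq ι] [CommSemiring R]

theorem permMatrix_pow (σ : Perm ι) (k : ℕ) : (σ ^ k).permMatrix R = σ.permMatrix R ^ k := by
  induction k with
  | zero => simp
  | succ k ih => rw [pow_succ, Matrix.permMatrix_mul, ih, pow_succ']

theorem aeval_smul_permMatrix_apply (σ : Perm ι) (p : R[X]) (t : R) (a b : ι) :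
    aeval (t • σ.permMatrix R) p a b = ∑ k ∈ p.support with (σ ^ k) a = b, p.coeff k * t ^ k := by
  rw [aeval_def, eval₂_eq_sum, Polynomial.sum_def, Matrix.sum_apply, Finset.sum_filter]
  refine Finset.sum_congr rfl fun k _ => ?_
  rw [_root_.smul_pow, ← permMatrix_pow]
  simp [Algebra.algebraMap_eq_smul_one, PEquiv.toMatrix_apply, mul_comm]

end Equiv.Perm

theorem val_finRotate_pow_apply {n : ℕ} [NeZero n] (k : ℕ) (a : Fin n) :
    ((finRotate n ^ k) a : ℕ) = (a + k) % n := by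
  induction k with
  | zero => simp [Nat.mod_eq_of_lt a.isLt]
  | succ k ih =>
    rw [pow_succ', Equiv.Perm.mul_apply, finRotate_apply, Fin.val_add, ih, Fin.val_one',
      Nat.add_mod_mod, Nat.mod_add_mod, add_assoc]

theorem aeval_smul_permMatrix_finRotate_apply {R : Type*} [CommSemiring R] (n i : ℕ) [NeZero n]
    (p : R[X]) (t : R) :
    aeval (t • (finRotate n).permMatrix R) p 0 ⟨i % n, Nat.mod_lt i (NeZero.pos n)⟩ =
      (p.residueClassPart n i).eval t := by
  rw [Equiv.Perm.aeval_smul_permMatrix_apply, eval_residueClassPart]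
  congr! 2 with k
  rw [Fin.ext_iff, val_finRotate_pow_apply, Fin.val_zero, zero_add]
  rfl

theorem first_and_last_coeffs_nonneg_general (n m i : ℕ) (hn : 1 ≤ n)
    (hrange : i ≤ n - 1 ∨ m - n + 1 ≤ i)
    (p : Polynomial ℝ) (hp : p ∈ PolyPres n) (hdeg : p.natDegree ≤ m) :
    0 ≤ p.coeff i := by
  have : NeZero n := .of_pos hn
  have hq : ∀ t ∈ Set.Ioi (0 : ℝ), 0 ≤ (p.residueClassPart n i).eval t := fun t ht => by
    rw [← aeval_smul_permMatrix_finRotate_apply]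
    refine hp _ (fun a b => mul_nonneg (le_of_lt ht) ?_) _ _
    rw [Equiv.Perm.permMatrix, PEquiv.toMatrix_apply]
    split_ifs <;> norm_num
  rw [← coeff_residueClassPart_self p n i]
  rcases hrange with hlow | hhigh
  · exact coeff_nonneg_of_nonneg_on_Ioi_of_coeff_lt_eq_zero hq
      fun j hj => coeff_residueClassPart_of_lt (by omega) hj
  · exact coeff_nonneg_of_nonneg_on_Ioi_of_natDegree_le hq
      (natDegree_residueClassPart_le (by omega))

theorem first_and_last_coeffs_nonneg (n m i : ℕ) (hn : 1 ≤ n) (hm : 2 * n ≤ m)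
    (hi : i ≤ m) (hrange : i ≤ n - 1 ∨ m - n + 1 ≤ i)
    (p : Polynomial ℝ) (hp : p ∈ PolyPres n) (hdeg : p.natDegree ≤ m) :
    0 ≤ p.coeff i :=
  first_and_last_coeffs_nonneg_general n m i hn hrange p hp hdeg
end

section
/- For n = 2 and t ≤ 2, the polynomial p(x) = 1 + x − t x² + x³ + x⁴ satisfies: p(A) is entrywise nonnegative for every entrywise nonnegative 2×2 real matrix A. -/
open Polynomial

private lemma diag_aux (a b c d : ℝ) (ha : 0 ≤ a) (hb : 0 ≤ b) (hc : 0 ≤ c) (hd : 0 ≤ d) :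
    0 ≤ 1 + a - 2*(a^2 + b*c) + (a^3 + 2*a*b*c + b*c*d)
      + ((a^2+b*c)^2 + b*c*(a+d)^2) := by
  nlinarith [sq_nonneg (a^2 + b*c - 1), sq_nonneg (b*c - 1), sq_nonneg (a - 1), sq_nonneg a,
    mul_nonneg (mul_nonneg hb hc) hd, mul_nonneg (mul_nonneg (mul_nonneg hb hc) ha) ha,
    mul_nonneg (mul_nonneg (mul_nonneg hb hc) ha) hd, mul_nonneg hb hc,
    mul_nonneg (mul_nonneg (mul_nonneg hb hc) hd) hd,
    mul_nonneg (mul_nonneg ha ha) (sq_nonneg (a-1)), mul_nonneg ha (sq_nonneg (a-1))]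

private lemma offd_aux (a b c d : ℝ) (ha : 0 ≤ a) (hb : 0 ≤ b) (hc : 0 ≤ c) (hd : 0 ≤ d) :
    0 ≤ 1 - 2*(a+d) + (a^2+a*d+b*c+d^2) + (a+d)*(a^2+2*b*c+d^2) := by
  nlinarith [sq_nonneg (a+d-1), sq_nonneg (a-d), mul_nonneg (mul_nonneg hb hc) (add_nonneg ha hd),
    mul_nonneg hb hc, mul_nonneg (add_nonneg ha hd) (sq_nonneg (a+d-1)),
    mul_nonneg ha hd, mul_nonneg (mul_nonneg ha hd) (add_nonneg ha hd),
    sq_nonneg (a+d)]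

theorem case_n_two (t : ℝ) (ht : t ≤ 2) (A : Matrix (Fin 2) (Fin 2) ℝ)
    (hA : ∀ i j, 0 ≤ A i j) :
    ∀ i j, 0 ≤ (aeval A (1 + X - C t * X ^ 2 + X ^ 3 + X ^ 4 : Polynomial ℝ)) i j := by
  intro i j
  simp only [map_add, map_sub, map_mul, map_pow, map_one, aeval_X, aeval_C, aeval_one]
  have ht' : 0 ≤ 2 - t := by linarith
  have h00 := hA 0 0; have h01 := hA 0 1; have h10 := hA 1 0; have h11 := hA 1 1
  fin_cases i <;> fin_cases j <;>
    simp [Matrix.add_apply, Matrix.sub_apply, Matrix.mul_apply, Fin.sum_univ_succ,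
      Matrix.one_apply, pow_succ, Matrix.algebraMap_matrix_apply, Algebra.algebraMap_self_apply]
  · nlinarith [diag_aux (A 0 0) (A 0 1) (A 1 0) (A 1 1) h00 h01 h10 h11,
      mul_nonneg ht' (add_nonneg (mul_nonneg h00 h00) (mul_nonneg h01 h10))]
  · nlinarith [mul_nonneg h01 (offd_aux (A 0 0) (A 0 1) (A 1 0) (A 1 1) h00 h01 h10 h11),
      mul_nonneg (mul_nonneg ht' h01) (add_nonneg h00 h11)]
  · nlinarith [mul_nonneg h10 (offd_aux (A 0 0) (A 0 1) (A 1 0) (A 1 1) h00 h01 h10 h11),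
      mul_nonneg (mul_nonneg ht' h10) (add_nonneg h00 h11)]
  · nlinarith [diag_aux (A 1 1) (A 1 0) (A 0 1) (A 0 0) h11 h10 h01 h00,
      mul_nonneg ht' (add_nonneg (mul_nonneg h11 h11) (mul_nonneg h10 h01))]
end
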